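/- Let f(t) = t² on [-1/2,1/2] and let ε > 0 satisfy ε² ≤ 1/480. Then ω(ε, f, F_c) = (15^{2/5}/2) ε^{4/5}. -/

import Mathlib

open MeasureTheory

/-- The local modulus of continuity of `f` at `0` over the class of convex
functions on `[-1/2, 1/2]`. -/
noncomputable def omegaConvex (ε : ℝ) (f : ℝ → ℝ) : ℝ :=
  sSup {d : ℝ | ∃ g : ℝ → ℝ, ConvexOn ℝ (Set.Icc (-(1:ℝ)/2) (1/2)) g ∧
    (∫ t in (-(1:ℝ)/2)..(1/2), (g t - f t)^2) ≤ ε^2 ∧ d = |g 0 - f 0|}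

/-!
Put `b⁵ = 15 ε²`, so that the claimed value is `b²/2` and `b ≤ 1/2`. The extremal function
attains `|g 0| = b²/2` at distance exactly `ε`. Conversely, replacing a convex `g` by its even part
`(g t + g (-t))/2` keeps `g 0` and convexity and does not increase the distance to the even
function `t²`. If `g 0 > b²/2`, the even part stays above `g 0` and the distance is already
larger than `ε` on `[-2b/3, 2b/3]`. If `g 0 < -b²/2`, write `g t - t² = -(w + φ + ψ)` on `[0, b]`,
where `w t = (t - b/2)(t - b)`, `φ = -b²/2 - g 0 > 0` and `ψ` is the defect of `g` from the line of
slope `3b/2` through `(0, g 0)`. Since `w` changes sign at `b/2`, exactly where the secant slope of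
`g` from `0` passes its value at `b/2`, the cross term `∫ w ψ` is at least a multiple of
`∫ t w = 0`; hence the distance is at least `b⁵/15 + b³ φ/3 > ε²`.
-/

open Set

section Convex

variable {s : Set ℝ} {g : ℝ → ℝ} {a b : ℝ}

lemma ConvexOn.map_add_div_two_le (hg : ConvexOn ℝ s g) {x y : ℝ} (hx : x ∈ s) (hy : y ∈ s) :
    g ((x + y) / 2) ≤ (g x + g y) / 2 := by
  calc g ((x + y) / 2) = g ((1/2 : ℝ) • x + (1/2 : ℝ) • y) := by
        rw [smul_eq_mul, smul_eq_mul]; ring_nf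
    _ ≤ (1/2 : ℝ) • g x + (1/2 : ℝ) • g y := hg.2 hx hy (by norm_num) (by norm_num) (by norm_num)
    _ = (g x + g y) / 2 := by rw [smul_eq_mul, smul_eq_mul]; ring

lemma ConvexOn.exists_forall_abs_le (hg : ConvexOn ℝ (Icc a b) g) :
    ∃ C, ∀ t ∈ Icc a b, |g t| ≤ C := by
  set M := max (g a) (g b)
  have hle_max : ∀ t ∈ Icc a b, g t ≤ M := fun t ht =>
    hg.le_on_segment (left_mem_Icc.2 (ht.1.trans ht.2)) (right_mem_Icc.2 (ht.1.trans ht.2))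
      (by rwa [segment_eq_Icc (ht.1.trans ht.2)])
  refine ⟨max M (M - 2 * g ((a + b) / 2)), fun t ht =>
    abs_le.2 ⟨?_, (hle_max t ht).trans (le_max_left _ _)⟩⟩
  have hrefl : a + b - t ∈ Icc a b := ⟨by linarith [ht.2], by linarith [ht.1]⟩
  have hmid := hg.map_add_div_two_le ht hrefl
  rw [add_sub_cancel] at hmid
  linarith [hle_max _ hrefl, le_max_right M (M - 2 * g ((a + b) / 2))]

lemma ConvexOn.intervalIntegrable_comp (hg : ConvexOn ℝ (Icc a b) g) (hab : a ≤ b)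
    {F : ℝ → ℝ → ℝ} (hF : Continuous (Function.uncurry F)) :
    IntervalIntegrable (fun t => F (g t) t) volume a b := by
  obtain ⟨C, hC⟩ := hg.exists_forall_abs_le
  obtain ⟨D, hD⟩ := (isCompact_Icc.prod isCompact_Icc : IsCompact (Icc (-C) C ×ˢ Icc a b))
    |>.exists_bound_of_continuousOn hF.continuousOn
  have hcont : ContinuousOn g (Ioo a b) := by
    simpa only [interior_Icc] using hg.continuousOn_interior
  rw [intervalIntegrable_iff_integrableOn_Ioo_of_le hab]
  refine Integrable.mono' (g := fun _ => D) (integrableOn_const measure_Ioo_lt_top.ne)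
    ((hF.comp_continuousOn (hcont.prodMk continuousOn_id)).aestronglyMeasurable
      measurableSet_Ioo) ?_
  filter_upwards [ae_restrict_mem measurableSet_Ioo] with t ht
  exact hD (g t, t) ⟨abs_le.1 (hC t (Ioo_subset_Icc_self ht)), Ioo_subset_Icc_self ht⟩

lemma ConvexOn.sub_mul_secant_cross_nonneg (hg : ConvexOn ℝ s g) {m t : ℝ} (ha : a ∈ s)
    (hm : m ∈ s) (ht : t ∈ s) (ham : a < m) (hat : a ≤ t) :
    0 ≤ (t - m) * ((g t - g a) * (m - a) - (g m - g a) * (t - a)) := by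
  rcases hat.eq_or_lt with rfl | hat
  · simp
  rcases le_total t m with htm | hmt
  · have h := hg.secant_mono ha ht hm hat.ne' ham.ne' htm
    rw [div_le_div_iff₀ (sub_pos.2 hat) (sub_pos.2 ham)] at h
    exact mul_nonneg_of_nonpos_of_nonpos (sub_nonpos.2 htm) (by linarith)
  · have h := hg.secant_mono ha hm ht ham.ne' hat.ne' hmt
    rw [div_le_div_iff₀ (sub_pos.2 ham) (sub_pos.2 hat)] at h
    exact mul_nonneg (sub_nonneg.2 hmt) (by linarith)

end Convex

noncomputable def evenPart (g : ℝ → ℝ) (t : ℝ) : ℝ := (g t + g (-t)) / 2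

lemma evenPart_zero (g : ℝ → ℝ) : evenPart g 0 = g 0 := by
  simp [evenPart]

section EvenPart

variable {g : ℝ → ℝ} {c : ℝ}

lemma ConvexOn.comp_neg_Icc (hg : ConvexOn ℝ (Icc (-c) c) g) :
    ConvexOn ℝ (Icc (-c) c) (fun t => g (-t)) := by
  refine ⟨convex_Icc _ _, fun x hx y hy p q hp hq hpq => ?_⟩
  have h := hg.2 (⟨by linarith [hx.2], by linarith [hx.1]⟩ : -x ∈ Icc (-c) c)
    (⟨by linarith [hy.2], by linarith [hy.1]⟩ : -y ∈ Icc (-c) c) hp hq hpq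
  simpa only [smul_eq_mul, neg_add, mul_neg] using h

lemma convexOn_evenPart (hg : ConvexOn ℝ (Icc (-c) c) g) :
    ConvexOn ℝ (Icc (-c) c) (evenPart g) := by
  refine ((hg.add hg.comp_neg_Icc).smul (by norm_num : (0:ℝ) ≤ 1/2)).congr fun t _ => ?_
  simp only [evenPart, Pi.add_apply, smul_eq_mul]
  ring

lemma ConvexOn.apply_zero_le_evenPart (hg : ConvexOn ℝ (Icc (-c) c) g) {t : ℝ}
    (ht : t ∈ Icc (-c) c) : g 0 ≤ evenPart g t := by
  have h := hg.map_add_div_two_le ht (⟨by linarith [ht.2], by linarith [ht.1]⟩ : -t ∈ Icc (-c) c)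
  rwa [add_neg_cancel, zero_div] at h

end EvenPart

lemma intervalIntegral.integral_symm_eq_integral_add_comp_neg {F : ℝ → ℝ} {s : ℝ}
    (hF : IntervalIntegrable F volume 0 s)
    (hFneg : IntervalIntegrable (fun t => F (-t)) volume 0 s) :
    ∫ t in (-s)..s, F t = ∫ t in 0..s, (F t + F (-t)) := by
  have hF' : IntervalIntegrable F volume (-s) 0 := by
    simpa using (IntervalIntegrable.iff_comp_neg (f := fun t => F (-t))).1 hFneg.symm
  rw [intervalIntegral.integral_add hF hFneg, intervalIntegral.integral_comp_neg, neg_zero,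
    add_comm, intervalIntegral.integral_add_adjacent_intervals hF' hF]

lemma ConvexOn.two_mul_integral_evenPart_le {g : ℝ → ℝ} {c s : ℝ} (hg : ConvexOn ℝ (Icc (-c) c) g)
    (hs : 0 ≤ s) (hsc : s ≤ c) :
    2 * ∫ t in 0..s, (evenPart g t - t^2)^2 ≤ ∫ t in (-c)..c, (g t - t^2)^2 := by
  have hsub : Icc 0 s ⊆ Icc (-c) c := Icc_subset_Icc (by linarith) hsc
  have hsq : Continuous (Function.uncurry fun (x t : ℝ) => (x - t^2)^2) := by fun_prop
  have hI := (hg.subset hsub (convex_Icc _ _)).intervalIntegrable_comp hs hsq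
  have hIneg := (hg.comp_neg_Icc.subset hsub (convex_Icc _ _)).intervalIntegrable_comp hs
    (F := fun x t => (x - (-t)^2)^2) (by fun_prop)
  have hIeven :=
    ((convexOn_evenPart hg).subset hsub (convex_Icc _ _)).intervalIntegrable_comp hs hsq
  calc 2 * ∫ t in 0..s, (evenPart g t - t^2)^2
      = ∫ t in 0..s, 2 * (evenPart g t - t^2)^2 := (intervalIntegral.integral_const_mul _ _).symm
    _ ≤ ∫ t in 0..s, ((g t - t^2)^2 + (g (-t) - (-t)^2)^2) := by
        refine intervalIntegral.integral_mono_on hs (hIeven.const_mul 2) (hI.add hIneg)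
          fun t _ => ?_
        rw [evenPart, neg_sq]
        nlinarith [sq_nonneg (g t - g (-t))]
    _ = ∫ t in (-s)..s, (g t - t^2)^2 :=
        (intervalIntegral.integral_symm_eq_integral_add_comp_neg hI hIneg).symm
    _ ≤ ∫ t in (-c)..c, (g t - t^2)^2 :=
        intervalIntegral.integral_mono_interval (by linarith) (by linarith) hsc
          (Filter.Eventually.of_forall fun t => sq_nonneg _)
          (hg.intervalIntegrable_comp (by linarith) hsq)

lemma ConvexOn.le_integral_sq_sub_sq {h : ℝ → ℝ} {b : ℝ} (hh : ConvexOn ℝ (Icc 0 b) h)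
    (hb : 0 < b) :
    b^5/30 + b^3/6 * (-(b^2/2) - h 0) ≤ ∫ t in 0..b, (h t - t^2)^2 := by
  set φ := -(b^2/2) - h 0
  -- with `w t = (t - b/2)(t - b)`, convexity gives `2 w ψ ≥ K t w` pointwise, and `∫₀ᵇ t w = 0`
  set K := 3*b - 4*(h (b/2) - h 0)/b
  have hpt : ∀ t ∈ Icc 0 b, ((t - b/2) * (t - b))^2 + 2*φ*((t - b/2) * (t - b))
      + K*(t*((t - b/2) * (t - b))) ≤ (h t - t^2)^2 := by
    intro t ht
    have hsec := hh.sub_mul_secant_cross_nonneg (left_mem_Icc.2 hb.le)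
      (⟨by linarith, by linarith⟩ : b/2 ∈ Icc 0 b) ht (by linarith) ht.1
    have hcross : 0 ≤ (t - b/2) * (t - b) * ((h (b/2) - h 0) * t - (h t - h 0) * (b/2)) := by
      have e : (t - b/2) * (t - b) * ((h (b/2) - h 0) * t - (h t - h 0) * (b/2))
          = (b - t) * ((t - b/2) * ((h t - h 0) * (b/2 - 0) - (h (b/2) - h 0) * (t - 0))) := by ring
      rw [e]
      exact mul_nonneg (sub_nonneg.2 ht.2) hsec
    have e : (h t - t^2)^2 - (((t - b/2) * (t - b))^2 + 2*φ*((t - b/2) * (t - b))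
        + K*(t*((t - b/2) * (t - b))))
        = (φ + 3*b/2*t - (h t - h 0))^2
          + 4/b * ((t - b/2) * (t - b) * ((h (b/2) - h 0) * t - (h t - h 0) * (b/2))) := by
      simp only [φ, K]
      field_simp
      ring
    linarith [sq_nonneg (φ + 3*b/2*t - (h t - h 0)),
      mul_nonneg (by positivity : (0:ℝ) ≤ 4/b) hcross]
  have hpoly : ∫ t in 0..b, (((t - b/2) * (t - b))^2 + 2*φ*((t - b/2) * (t - b))
      + K*(t*((t - b/2) * (t - b)))) = b^5/30 + b^3/6 * φ := by
    have e : ∀ t : ℝ, ((t - b/2) * (t - b))^2 + 2*φ*((t - b/2) * (t - b))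
        + K*(t*((t - b/2) * (t - b))) = t^4 + (K - 3*b)*t^3 + (13/4*b^2 + 2*φ - 3/2*K*b)*t^2
          + (K*b^2/2 - 3/2*b^3 - 3*b*φ)*t^1 + (b^4/4 + φ*b^2)*t^0 := fun t => by ring
    simp only [e]
    simp (disch := apply Continuous.intervalIntegrable; fun_prop) only
      [intervalIntegral.integral_add, intervalIntegral.integral_const_mul, integral_pow]
    ring
  calc b^5/30 + b^3/6 * φ = _ := hpoly.symm
    _ ≤ _ := intervalIntegral.integral_mono_on hb.le
        (Continuous.intervalIntegrable (by fun_prop) _ _)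
        (hh.intervalIntegrable_comp hb.le (F := fun x t => (x - t^2)^2) (by fun_prop)) hpt

lemma le_integral_sq_sub_sq_of_sq_le {h : ℝ → ℝ} {s : ℝ} (hs : 0 ≤ s)
    (hh : ∀ t ∈ Icc 0 s, s^2 ≤ h t)
    (hint : IntervalIntegrable (fun t => (h t - t^2)^2) volume 0 s) :
    8/15 * s^5 ≤ ∫ t in 0..s, (h t - t^2)^2 := by
  have hpoly : ∫ t in 0..s, (s^2 - t^2)^2 = 8/15 * s^5 := by
    have e : ∀ t : ℝ, (s^2 - t^2)^2 = s^4*t^0 + (-2*s^2)*t^2 + t^4 := fun t => by ring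
    simp only [e]
    simp (disch := apply Continuous.intervalIntegrable; fun_prop) only
      [intervalIntegral.integral_add, intervalIntegral.integral_const_mul, integral_pow]
    ring
  rw [← hpoly]
  refine intervalIntegral.integral_mono_on hs (Continuous.intervalIntegrable (by fun_prop) _ _) hint
    fun t ht => pow_le_pow_left₀ ?_ ?_ 2
  · nlinarith [ht.1, ht.2]
  · linarith [hh t ht]

lemma ConvexOn.abs_apply_zero_le_of_integral_le {g : ℝ → ℝ} {b c : ℝ}
    (hg : ConvexOn ℝ (Icc (-c) c) g) (hb : 0 < b) (hbc : b ≤ c)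
    (hint : ∫ t in (-c)..c, (g t - t^2)^2 ≤ b^5/15) : |g 0| ≤ b^2/2 := by
  rw [abs_le]
  constructor
  · by_contra! hneg
    have hhalf := ((convexOn_evenPart hg).subset (Icc_subset_Icc (by linarith) hbc)
      (convex_Icc _ _)).le_integral_sq_sub_sq hb
    rw [evenPart_zero] at hhalf
    nlinarith [hg.two_mul_integral_evenPart_le hb.le hbc, pow_pos hb 3]
  · by_contra! hpos
    -- `s = 2b/3` works: `s² < b²/2 < g 0` and `16 s⁵/15 > b⁵/15`
    have hs : 0 ≤ 2*b/3 := by positivity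
    have hsub : Icc 0 (2*b/3) ⊆ Icc (-c) c := Icc_subset_Icc (by linarith) (by linarith)
    have hlow := le_integral_sq_sub_sq_of_sq_le hs
      (fun t ht => by nlinarith [hg.apply_zero_le_evenPart (hsub ht)])
      (((convexOn_evenPart hg).subset hsub (convex_Icc _ _)).intervalIntegrable_comp hs
        (F := fun x t => (x - t^2)^2) (by fun_prop))
    nlinarith [hg.two_mul_integral_evenPart_le hs (by linarith), pow_pos hb 5]

/-- The extremal function `3b/2 |t| - b²/2` on `|t| ≤ b`, `t²` elsewhere; with `p = (|t| - b)⁺`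
it equals `3b/2 |t| - b²/2 + (b/2 + p) p`, which exhibits it as a sum of convex functions. -/
noncomputable def extremal (b t : ℝ) : ℝ :=
  3*b/2*|t| - b^2/2 + (b/2 + max (|t| - b) 0) * max (|t| - b) 0

lemma extremal_of_abs_le {b t : ℝ} (ht : |t| ≤ b) : extremal b t = 3*b/2*|t| - b^2/2 := by
  simp [extremal, max_eq_right (sub_nonpos.2 ht)]

lemma extremal_of_le_abs {b t : ℝ} (ht : b ≤ |t|) : extremal b t = t^2 := by
  rw [extremal, max_eq_left (sub_nonneg.2 ht), ← sq_abs t]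
  ring

lemma convexOn_extremal {b : ℝ} (hb : 0 ≤ b) : ConvexOn ℝ univ (extremal b) := by
  have habs : ConvexOn ℝ univ fun t : ℝ => |t| := convexOn_norm convex_univ
  have hp : ConvexOn ℝ univ fun t : ℝ => max (|t| - b) 0 :=
    (habs.add_const (-b)).sup (convexOn_const 0 convex_univ)
  refine (((habs.smul (by positivity : 0 ≤ 3*b/2)).add ((hp.smul (by positivity : 0 ≤ b/2)).add
    (hp.pow (fun _ _ => le_max_right _ _) 2))).add_const (-(b^2/2))).congr fun t _ => ?_
  simp only [extremal, Pi.add_apply, Pi.pow_apply, smul_eq_mul, sub_eq_add_neg]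
  ring

lemma integral_extremal_sub_sq {b c : ℝ} (hb : 0 ≤ b) (hbc : b ≤ c) :
    ∫ t in (-c)..c, (extremal b t - t^2)^2 = b^5/15 := by
  have hcont : Continuous (extremal b) := by unfold extremal; fun_prop
  have heven : ∀ t, extremal b (-t) = extremal b t := fun t => by simp [extremal]
  rw [intervalIntegral.integral_symm_eq_integral_add_comp_neg
      (Continuous.intervalIntegrable (by fun_prop) _ _)
      (Continuous.intervalIntegrable (by fun_prop) _ _),
    ← intervalIntegral.integral_add_adjacent_intervals (b := b)
      (Continuous.intervalIntegrable (by fun_prop) _ _)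
      (Continuous.intervalIntegrable (by fun_prop) _ _)]
  have hinner : ∫ t in 0..b, ((extremal b t - t^2)^2 + (extremal b (-t) - (-t)^2)^2)
      = ∫ t in 0..b, 2 * ((t - b/2) * (t - b))^2 := by
    refine intervalIntegral.integral_congr fun t ht => ?_
    rw [uIcc_of_le hb] at ht
    rw [heven, neg_sq, extremal_of_abs_le (by rw [abs_of_nonneg ht.1]; exact ht.2),
      abs_of_nonneg ht.1]
    ring
  have houter : ∫ t in b..c, ((extremal b t - t^2)^2 + (extremal b (-t) - (-t)^2)^2) = 0 := by
    refine (intervalIntegral.integral_congr fun t ht => ?_).trans intervalIntegral.integral_zero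
    rw [uIcc_of_le hbc] at ht
    rw [heven, neg_sq, extremal_of_le_abs (by rw [abs_of_nonneg (hb.trans ht.1)]; exact ht.1)]
    simp
  have e : ∀ t : ℝ, 2 * ((t - b/2) * (t - b))^2
      = 2*t^4 + (-6*b)*t^3 + (13/2*b^2)*t^2 + (-3*b^3)*t^1 + (b^4/2)*t^0 := fun t => by ring
  rw [hinner, houter, add_zero]
  simp only [e]
  simp (disch := apply Continuous.intervalIntegrable; fun_prop) only
    [intervalIntegral.integral_add, intervalIntegral.integral_const_mul, integral_pow]
  ring

/-- Example 4 of Cai, Low and Xia (2013): for `f t = t²` and `ε² ≤ 1/480`, the local modulus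
over the convex class equals `(15^{2/5}/2) ε^{4/5}`. -/
theorem modulus_square_convex (ε : ℝ) (hε : 0 < ε) (hε2 : ε^2 ≤ 1/480) :
    omegaConvex ε (fun t => t^2) = (15 ^ ((2:ℝ)/5) / 2) * ε ^ ((4:ℝ)/5) := by
  set b : ℝ := 15 ^ ((1:ℝ)/5) * ε ^ ((2:ℝ)/5)
  have hb : 0 < b := by positivity
  have hb_pow : ∀ n : ℕ, b ^ n = 15 ^ ((n:ℝ)/5) * ε ^ (2*(n:ℝ)/5) := fun n => by
    rw [mul_pow, ← Real.rpow_mul_natCast (by norm_num), ← Real.rpow_mul_natCast hε.le]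
    ring_nf
  have hb5 : b^5 = 15 * ε^2 := by
    rw [hb_pow]; norm_num
  have hb_le : b ≤ 1/2 := by
    rw [← pow_le_pow_iff_left₀ hb.le (by norm_num) (by norm_num : (5:ℕ) ≠ 0)]
    linarith
  have hb2 : b^2/2 = 15 ^ ((2:ℝ)/5) / 2 * ε ^ ((4:ℝ)/5) := by
    rw [hb_pow]; norm_num; ring
  rw [← hb2]
  refine IsGreatest.csSup_eq ⟨⟨extremal b, (convexOn_extremal hb.le).subset (subset_univ _)
    (convex_Icc _ _), ?_, ?_⟩, ?_⟩
  · rw [neg_div, integral_extremal_sub_sq hb.le hb_le]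
    linarith
  · show b^2/2 = |extremal b 0 - 0^2|
    rw [extremal_of_abs_le (abs_zero.trans_le hb.le), abs_zero, mul_zero, zero_sub,
      zero_pow two_ne_zero, sub_zero, abs_neg, abs_of_nonneg (by positivity)]
  · rintro d ⟨g, hg, hint, rfl⟩
    rw [neg_div] at hg hint
    simpa using hg.abs_apply_zero_le_of_integral_le hb hb_le (by linarith)
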